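/- Under Assumptions (A) and (B), for every compact set K ⊂ [0,T) × ℝ^d and every bounded continuous function φ : ℝ^d → ℝ, sup_{(t,x) ∈ K} | ∫_{ℝ^d} φ(y) η_{λ,t,x}(y) dy − φ(x*) | → 0 as λ ↓ 0; that is, the conditional terminal laws η_{λ,t,x}(y) dy converge to δ_{x*} uniformly on compact subsets of [0,T) × ℝ^d. -/

import Mathlib

open MeasureTheory Real Filter Topology
open scoped RealInnerProductSpace

noncomputable section

/-- The heat kernel with diffusivity `β`: `G_r(z) = (4πβr)^(−d/2) exp(−‖z‖²/(4βr))`. -/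
def heatK {d : ℕ} (β r : ℝ) (z : EuclideanSpace ℝ (Fin d)) : ℝ :=
  (4 * π * β * r) ^ (-(d : ℝ) / 2) * Real.exp (-‖z‖ ^ 2 / (4 * β * r))

/-- The Laplacian of a scalar function on `ℝ^d`. -/
def lap {d : ℕ} (g : EuclideanSpace ℝ (Fin d) → ℝ) (x : EuclideanSpace ℝ (Fin d)) : ℝ :=
  ∑ i : Fin d,
    fderiv ℝ (fun z => fderiv ℝ g z (EuclideanSpace.single i 1)) x (EuclideanSpace.single i 1)

/-- The normalized Gibbs density `π_λ(y) = e^{−α_λ f(y)} / M_λ`, with `α_λ = T/(2λβ)`. -/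
def gibbsDen {d : ℕ} (T β lam : ℝ) (f : EuclideanSpace ℝ (Fin d) → ℝ)
    (y : EuclideanSpace ℝ (Fin d)) : ℝ :=
  Real.exp (-(T / (2 * lam * β)) * f y) / ∫ z, Real.exp (-(T / (2 * lam * β)) * f z)

/-- `h_λ(t,x) = ∫ G_{T−t}(x−y) π_λ(y) dy`. -/
def hHC {d : ℕ} (T β lam : ℝ) (f : EuclideanSpace ℝ (Fin d) → ℝ) (t : ℝ)
    (x : EuclideanSpace ℝ (Fin d)) : ℝ :=
  ∫ y, heatK β (T - t) (x - y) * gibbsDen T β lam f y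

/-- The conditional terminal density `η_{λ,t,x}(y) = G_{T−t}(x−y) π_λ(y) / h_λ(t,x)`. -/
def etaHC {d : ℕ} (T β lam : ℝ) (f : EuclideanSpace ℝ (Fin d) → ℝ) (t : ℝ)
    (x y : EuclideanSpace ℝ (Fin d)) : ℝ :=
  heatK β (T - t) (x - y) * gibbsDen T β lam f y / hHC T β lam f t x

/-- The barycenter `a_λ(t,x) = ∫ y η_{λ,t,x}(y) dy`. -/
def aHC {d : ℕ} (T β lam : ℝ) (f : EuclideanSpace ℝ (Fin d) → ℝ) (t : ℝ)
    (x : EuclideanSpace ℝ (Fin d)) : EuclideanSpace ℝ (Fin d) :=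
  ∫ y, etaHC T β lam f t x y • y

/-- The optimal drift `u*_λ(t,x) = 2β ∇_x log h_λ(t,x)`. -/
def uHC {d : ℕ} (T β lam : ℝ) (f : EuclideanSpace ℝ (Fin d) → ℝ) (t : ℝ)
    (x : EuclideanSpace ℝ (Fin d)) : EuclideanSpace ℝ (Fin d) :=
  (2 * β) • gradient (fun z => Real.log (hHC T β lam f t z)) x

/-- The potential `Φ_λ(t,x) = −2β log h_λ(t,x)`. -/
def PhiHC {d : ℕ} (T β lam : ℝ) (f : EuclideanSpace ℝ (Fin d) → ℝ) (t : ℝ)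
    (x : EuclideanSpace ℝ (Fin d)) : ℝ :=
  -(2 * β) * Real.log (hHC T β lam f t x)

/-- The value function `V_λ(t,x) = −(2λβ/T) log h_λ(t,x) − (2λβ/T) log M_λ`. -/
def VHC {d : ℕ} (T β lam : ℝ) (f : EuclideanSpace ℝ (Fin d) → ℝ) (t : ℝ)
    (x : EuclideanSpace ℝ (Fin d)) : ℝ :=
  -(2 * lam * β / T) * Real.log (hHC T β lam f t x)
    - (2 * lam * β / T) * Real.log (∫ z, Real.exp (-(T / (2 * lam * β)) * f z))

/-!
The normalising constant `M_λ` cancels in `η`, so `∫ φ η_{λ,t,x}` is the average of `φ` against the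
weight `G_{T-t}(x - ·) e^{-α f}` with `α = T/(2λβ) → ∞`. For `(t, x)` in a compact subset of
`[0,T) × ℝ^d` these kernels are bounded above, and bounded below near `x*`, uniformly. Coercivity
and uniqueness of the minimiser give `f ≥ f(x*) + m` outside any neighbourhood `U` of `x*`, while
`f ≤ f(x*) + m/2` on a smaller neighbourhood of positive measure; so the weight carries at most a
fraction `O(e^{-α m/2})` of its mass outside `U`, uniformly in `(t, x)`, and on `U` the function `φ`
is close to `φ(x*)` (Laplace's principle).
-/

lemma exp_neg_mul_le_of_le {α L t : ℝ} (hα : 1 ≤ α) (h : L ≤ t) :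
    exp (-α * t) ≤ exp (-(α - 1) * L) * exp (-t) := by
  rw [← exp_add, exp_le_exp]
  nlinarith

lemma exists_add_le_of_tendsto_cocompact {X : Type*} [TopologicalSpace X] {f : X → ℝ} {x₀ : X}
    {U : Set X} (hf : Continuous f) (hcoer : Tendsto f (cocompact X) atTop)
    (hmin : ∀ y ≠ x₀, f x₀ < f y) (hU : IsOpen U) (hx₀ : x₀ ∈ U) :
    ∃ m > 0, ∀ y ∉ U, f x₀ + m ≤ f y := by
  rcases (Uᶜ).eq_empty_or_nonempty with hUc | ⟨y₁, hy₁⟩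
  · exact ⟨1, one_pos, fun y hy => (Set.eq_empty_iff_forall_notMem.1 hUc y hy).elim⟩
  obtain ⟨y₀, hy₀, hy₀min⟩ := hf.continuousOn.exists_isMinOn' hU.isClosed_compl hy₁
    ((hcoer.eventually (eventually_ge_atTop (f y₁))).filter_mono inf_le_left)
  have hne : y₀ ≠ x₀ := fun h => hy₀ (h ▸ hx₀)
  exact ⟨f y₀ - f x₀, sub_pos.2 (hmin y₀ hne), fun y hy => by linarith [isMinOn_iff.1 hy₀min y hy]⟩

lemma TendstoUniformlyOn.comp_tendsto {ι ι' α β : Type*} [UniformSpace β] {F : ι → α → β}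
    {f : α → β} {p : Filter ι} {p' : Filter ι'} {s : Set α} (h : TendstoUniformlyOn F f p s)
    {u : ι' → ι} (hu : Tendsto u p' p) : TendstoUniformlyOn (fun n => F (u n)) f p' s :=
  fun V hV => hu.eventually (h V hV)

section Laplace

variable {X : Type*} [MeasurableSpace X] {μ : Measure X}

lemma integrable_exp_neg_mul [TopologicalSpace X] [OpensMeasurableSpace X] {f : X → ℝ} {L α : ℝ}
    (hf : Continuous f) (hL : ∀ y, L ≤ f y) (hexp : Integrable (fun y => exp (-f y)) μ)
    (hα : 1 ≤ α) : Integrable (fun y => exp (-α * f y)) μ :=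
  (hexp.const_mul (exp (-(α - 1) * L))).mono'
    (continuous_exp.comp (continuous_const.mul hf)).aestronglyMeasurable
    (ae_of_all _ fun y => by
      rw [norm_of_nonneg (exp_pos _).le]
      exact exp_neg_mul_le_of_le hα (hL y))

lemma abs_integral_mul_div_integral_sub_le {w φ : X → ℝ} {U : Set X} {a ε D : ℝ}
    (hU : MeasurableSet U) (hw : Integrable w μ) (hw0 : ∀ y, 0 ≤ w y)
    (hφw : Integrable (fun y => φ y * w y) μ) (hε : 0 ≤ ε)
    (hφU : ∀ y ∈ U, |φ y - a| ≤ ε) (hφD : ∀ y, |φ y - a| ≤ D) (hpos : 0 < ∫ y, w y ∂μ) :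
    |(∫ y, φ y * w y ∂μ) / (∫ y, w y ∂μ) - a|
      ≤ ε + D * ((∫ y in Uᶜ, w y ∂μ) / ∫ y, w y ∂μ) := by
  set W := ∫ y, w y ∂μ
  have hdev : (∫ y, φ y * w y ∂μ) / W - a = (∫ y, (φ y - a) * w y ∂μ) / W := by
    simp_rw [sub_mul]
    rw [integral_sub hφw (hw.const_mul a), integral_const_mul, sub_div,
      mul_div_cancel_right₀ _ hpos.ne']
  have hbound : ∀ y, |(φ y - a) * w y| ≤ ε * w y + D * Uᶜ.indicator w y := by
    intro y
    rw [abs_mul, abs_of_nonneg (hw0 y)]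
    by_cases hy : y ∈ U
    · rw [Set.indicator_of_notMem (Set.notMem_compl_iff.2 hy), mul_zero, add_zero]
      exact mul_le_mul_of_nonneg_right (hφU y hy) (hw0 y)
    · rw [Set.indicator_of_mem (Set.mem_compl hy)]
      nlinarith [mul_le_mul_of_nonneg_right (hφD y) (hw0 y), mul_nonneg hε (hw0 y)]
  have habs : |∫ y, (φ y - a) * w y ∂μ| ≤ ε * W + D * ∫ y in Uᶜ, w y ∂μ := calc
    _ ≤ ∫ y, |(φ y - a) * w y| ∂μ := abs_integral_le_integral_abs
    _ ≤ ∫ y, (ε * w y + D * Uᶜ.indicator w y) ∂μ :=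
      integral_mono_of_nonneg (ae_of_all _ fun y => abs_nonneg _)
        ((hw.const_mul ε).add ((hw.indicator hU.compl).const_mul D)) (ae_of_all _ hbound)
    _ = ε * W + D * ∫ y in Uᶜ, w y ∂μ := by
      rw [integral_add (hw.const_mul ε) ((hw.indicator hU.compl).const_mul D),
        integral_const_mul, integral_const_mul, integral_indicator hU.compl]
  rw [hdev, abs_div, abs_of_pos hpos]
  calc |∫ y, (φ y - a) * w y ∂μ| / W ≤ (ε * W + D * ∫ y in Uᶜ, w y ∂μ) / W := by gcongr
    _ = ε + D * ((∫ y in Uᶜ, w y ∂μ) / W) := by field_simp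

lemma setIntegral_compl_mul_exp_le {g f : X → ℝ} {U : Set X} {α C L : ℝ}
    (hU : MeasurableSet U) (hα : 1 ≤ α) (hC : 0 ≤ C) (hg0 : ∀ y, 0 ≤ g y) (hgC : ∀ y, g y ≤ C)
    (hfU : ∀ y ∉ U, L ≤ f y) (hexp : Integrable (fun y => exp (-f y)) μ) :
    ∫ y in Uᶜ, g y * exp (-α * f y) ∂μ ≤ C * exp (-(α - 1) * L) * ∫ y, exp (-f y) ∂μ := calc
  _ ≤ ∫ y in Uᶜ, C * exp (-(α - 1) * L) * exp (-f y) ∂μ :=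
    integral_mono_of_nonneg (ae_of_all _ fun y => mul_nonneg (hg0 y) (exp_pos _).le)
      (hexp.const_mul _).integrableOn
      (ae_restrict_of_forall_mem hU.compl fun y hy => by
        dsimp only
        rw [mul_assoc]
        exact mul_le_mul (hgC y) (exp_neg_mul_le_of_le hα (hfU y hy)) (exp_pos _).le hC)
  _ = C * exp (-(α - 1) * L) * ∫ y in Uᶜ, exp (-f y) ∂μ := integral_const_mul _ _
  _ ≤ _ := mul_le_mul_of_nonneg_left
    (setIntegral_le_integral hexp (ae_of_all _ fun y => (exp_pos _).le)) (by positivity)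

lemma mul_exp_mul_measureReal_le_integral {g f : X → ℝ} {S : Set X} {α c L : ℝ}
    (hS : MeasurableSet S) (hSfin : μ S ≠ ⊤) (hα : 0 ≤ α) (hg0 : ∀ y, 0 ≤ g y)
    (hgS : ∀ y ∈ S, c ≤ g y) (hfS : ∀ y ∈ S, f y ≤ L)
    (hint : Integrable (fun y => g y * exp (-α * f y)) μ) :
    c * exp (-α * L) * μ.real S ≤ ∫ y, g y * exp (-α * f y) ∂μ :=
  (setIntegral_ge_of_const_le_real hS hSfin
      (fun y hy => mul_le_mul (hgS y hy)
        (exp_le_exp.2 (mul_le_mul_of_nonpos_left (hfS y hy) (neg_nonpos.2 hα)))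
        (exp_pos _).le (hg0 y))
      hint.integrableOn).trans
    (setIntegral_le_integral hint (ae_of_all _ fun y => mul_nonneg (hg0 y) (exp_pos _).le))

lemma setIntegral_compl_div_integral_le {g f : X → ℝ} {U S : Set X} {α c C L m : ℝ}
    (hU : MeasurableSet U) (hS : MeasurableSet S) (hSpos : 0 < μ.real S)
    (hα : 1 ≤ α) (hc : 0 < c) (hg0 : ∀ y, 0 ≤ g y) (hgC : ∀ y, g y ≤ C)
    (hgS : ∀ y ∈ S, c ≤ g y) (hfS : ∀ y ∈ S, f y ≤ L) (hfU : ∀ y ∉ U, L + m ≤ f y)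
    (hexp : Integrable (fun y => exp (-f y)) μ)
    (hint : Integrable (fun y => g y * exp (-α * f y)) μ) :
    (∫ y in Uᶜ, g y * exp (-α * f y) ∂μ) / ∫ y, g y * exp (-α * f y) ∂μ
      ≤ C * (∫ y, exp (-f y) ∂μ) * exp (L + m) / (c * μ.real S) * exp (-α * m) := by
  obtain ⟨hS0, hSfin⟩ := ENNReal.toReal_pos_iff.1 hSpos
  obtain ⟨y, hy⟩ := nonempty_of_measure_ne_zero hS0.ne'
  have hC : 0 ≤ C := (hc.le.trans (hgS y hy)).trans (hgC y)
  have hsplit : exp (-(α - 1) * (L + m)) = exp (L + m) * exp (-α * m) * exp (-α * L) := by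
    rw [← exp_add, ← exp_add]; ring_nf
  calc _ ≤ C * exp (-(α - 1) * (L + m)) * (∫ y, exp (-f y) ∂μ) / (c * exp (-α * L) * μ.real S) :=
        div_le_div₀ (by positivity) (setIntegral_compl_mul_exp_le hU hα hC hg0 hgC hfU hexp)
          (by positivity)
          (mul_exp_mul_measureReal_le_integral hS hSfin.ne (by linarith) hg0 hgS hfS hint)
    _ = _ := by rw [hsplit]; field_simp

def weightedGibbsMean (μ : Measure X) (f g φ : X → ℝ) (α : ℝ) : ℝ :=
  (∫ y, φ y * (g y * exp (-α * f y)) ∂μ) / ∫ y, g y * exp (-α * f y) ∂μ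

theorem tendstoUniformlyOn_weightedGibbsMean_atTop [TopologicalSpace X] [OpensMeasurableSpace X]
    [μ.IsOpenPosMeasure] [IsLocallyFiniteMeasure μ] {ι : Type*} {f φ : X → ℝ} {g : ι → X → ℝ}
    {s : Set ι} {x₀ : X} {N : Set X} {c C Cb : ℝ}
    (hf : Continuous f) (hcoer : Tendsto f (cocompact X) atTop) (hmin : ∀ y ≠ x₀, f x₀ < f y)
    (hexp : Integrable (fun y => exp (-f y)) μ) (hφ : Continuous φ) (hφb : ∀ y, |φ y| ≤ Cb)
    (hgm : ∀ i ∈ s, AEStronglyMeasurable (g i) μ) (hg0 : ∀ i ∈ s, ∀ y, 0 ≤ g i y)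
    (hgC : ∀ i ∈ s, ∀ y, g i y ≤ C) (hN : N ∈ 𝓝 x₀) (hc : 0 < c)
    (hgN : ∀ i ∈ s, ∀ y ∈ N, c ≤ g i y) :
    TendstoUniformlyOn (fun α i => weightedGibbsMean μ f (g i) φ α) (fun _ => φ x₀) atTop s := by
  rw [Metric.tendstoUniformlyOn_iff]
  intro ε hε
  set U := {y | |φ y - φ x₀| < ε / 2}
  have hU : IsOpen U := isOpen_lt (hφ.sub continuous_const).abs continuous_const
  obtain ⟨m, hm, hfU⟩ :=
    exists_add_le_of_tendsto_cocompact hf hcoer hmin hU (by simpa [U] using half_pos hε)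
  obtain ⟨F, hF, hFfin⟩ := μ.finiteAt_nhds x₀
  set S := interior (N ∩ F ∩ {y | f y < f x₀ + m / 2})
  have hSx₀ : S ∈ 𝓝 x₀ := interior_mem_nhds.2 <| inter_mem (inter_mem hN hF) <|
    (isOpen_lt hf continuous_const).mem_nhds (by simp only [Set.mem_ofPred_eq]; linarith)
  have hSfin : μ S ≠ ⊤ := ((measure_mono (interior_subset.trans
    (Set.inter_subset_left.trans Set.inter_subset_right))).trans_lt hFfin).ne
  have hSpos : 0 < μ.real S := ENNReal.toReal_pos (μ.measure_pos_of_mem_nhds hSx₀).ne' hSfin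
  set A := C * (∫ y, exp (-f y) ∂μ) * exp (f x₀ + m / 2 + m / 2) / (c * μ.real S)
  have hsmall : ∀ᶠ α in atTop, 2 * Cb * (A * exp (-α * (m / 2))) < ε / 2 := by
    have hlim : Tendsto (fun α : ℝ => 2 * Cb * (A * exp (-α * (m / 2)))) atTop (𝓝 0) := by
      simpa using ((tendsto_exp_atBot.comp
        (tendsto_neg_atTop_atBot.atBot_mul_const (half_pos hm))).const_mul A).const_mul (2 * Cb)
    exact hlim.eventually_lt_const (half_pos hε)
  have hle : ∀ y, f x₀ ≤ f y := fun y =>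
    (eq_or_ne y x₀).elim (fun h => h ▸ le_rfl) fun h => (hmin y h).le
  filter_upwards [hsmall, eventually_ge_atTop 1] with α hαsmall hα i hi
  have hint : Integrable (fun y => g i y * exp (-α * f y)) μ :=
    (integrable_exp_neg_mul hf hle hexp hα).bdd_mul (hgm i hi)
      (ae_of_all _ fun y => by rw [norm_of_nonneg (hg0 i hi y)]; exact hgC i hi y)
  have hgS : ∀ y ∈ S, c ≤ g i y := fun y hy => hgN i hi y (interior_subset hy).1.1
  have hfS : ∀ y ∈ S, f y ≤ f x₀ + m / 2 := fun y hy => (interior_subset hy).2.le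
  have hNpos : 0 < ∫ y, g i y * exp (-α * f y) ∂μ := lt_of_lt_of_le (by positivity)
    (mul_exp_mul_measureReal_le_integral isOpen_interior.measurableSet hSfin (by linarith)
      (hg0 i hi) hgS hfS hint)
  have hdev := abs_integral_mul_div_integral_sub_le (μ := μ) hU.measurableSet hint
    (fun y => mul_nonneg (hg0 i hi y) (exp_pos _).le)
    (hint.bdd_mul hφ.aestronglyMeasurable (ae_of_all _ hφb)) (half_pos hε).le
    (fun y hy => le_of_lt hy) (fun y => (abs_sub _ _).trans (add_le_add (hφb y) (hφb x₀))) hNpos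
  have hratio := setIntegral_compl_div_integral_le (m := m / 2) hU.measurableSet
    isOpen_interior.measurableSet
    hSpos hα hc (hg0 i hi) (hgC i hi) hgS hfS (fun y hy => by linarith [hfU y hy]) hexp hint
  rw [dist_comm, Real.dist_eq]
  calc _ ≤ ε / 2 + (Cb + Cb) * (A * exp (-α * (m / 2))) :=
        hdev.trans (by gcongr; linarith [abs_nonneg (φ x₀), hφb x₀])
    _ < ε := by linarith

end Laplace

section HeatKernel

variable {d : ℕ} {β r : ℝ}

lemma heatK_pos (hβ : 0 < β) (hr : 0 < r) (z : EuclideanSpace ℝ (Fin d)) : 0 < heatK β r z :=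
  mul_pos (rpow_pos_of_pos (by positivity) _) (exp_pos _)

lemma continuous_heatK (β r : ℝ) : Continuous (heatK (d := d) β r) :=
  continuous_const.mul ((continuous_norm.pow 2).neg.div_const _).rexp

lemma heatK_le {δ : ℝ} (hβ : 0 < β) (hδ : 0 < δ) (hδr : δ ≤ r) (z : EuclideanSpace ℝ (Fin d)) :
    heatK β r z ≤ (4 * π * β * δ) ^ (-(d : ℝ) / 2) := by
  have hr : 0 < r := hδ.trans_le hδr
  calc heatK β r z ≤ (4 * π * β * r) ^ (-(d : ℝ) / 2) * 1 := by
        unfold heatK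
        gcongr
        exact exp_le_one_iff.2 (div_nonpos_of_nonpos_of_nonneg (by simp) (by positivity))
    _ ≤ (4 * π * β * δ) ^ (-(d : ℝ) / 2) := by
        rw [mul_one]
        exact rpow_le_rpow_of_nonpos (by positivity) (by gcongr)
          (by rw [neg_div, neg_nonpos]; positivity)

lemma le_heatK {δ r₀ R : ℝ} (hβ : 0 < β) (hδ : 0 < δ) (hδr : δ ≤ r) (hrr₀ : r ≤ r₀)
    {z : EuclideanSpace ℝ (Fin d)} (hz : ‖z‖ ≤ R) :
    (4 * π * β * r₀) ^ (-(d : ℝ) / 2) * exp (-R ^ 2 / (4 * β * δ)) ≤ heatK β r z := by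
  have hr : 0 < r := hδ.trans_le hδr
  unfold heatK
  gcongr ?_ * exp ?_
  · exact rpow_le_rpow_of_nonpos (by positivity) (by gcongr)
      (by rw [neg_div, neg_nonpos]; positivity)
  · rw [neg_div, neg_div, neg_le_neg_iff]
    exact div_le_div₀ (by positivity) (by gcongr) (by positivity) (by gcongr)

end HeatKernel

lemma integral_mul_etaHC {d : ℕ} {T β lam : ℝ} {f : EuclideanSpace ℝ (Fin d) → ℝ}
    (hM : ∫ z, exp (-(T / (2 * lam * β)) * f z) ≠ 0) (φ : EuclideanSpace ℝ (Fin d) → ℝ)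
    (t : ℝ) (x : EuclideanSpace ℝ (Fin d)) :
    ∫ y, φ y * etaHC T β lam f t x y
      = weightedGibbsMean volume f (fun y => heatK β (T - t) (x - y)) φ (T / (2 * lam * β)) := by
  unfold etaHC hHC gibbsDen weightedGibbsMean
  simp_rw [← mul_div_assoc, integral_div, div_div_div_cancel_right₀ hM]

lemma tendsto_div_two_mul_mul_nhdsGT_zero_atTop {a b : ℝ} (ha : 0 < a) (hb : 0 < b) :
    Tendsto (fun lam => a / (2 * lam * b)) (𝓝[>] 0) atTop := by
  refine (tendsto_inv_nhdsGT_zero.const_mul_atTop (by positivity : 0 < a / (2 * b))).congr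
    fun lam => ?_
  field_simp

theorem conditional_low_temp_general (d : ℕ) (T β : ℝ)
    (hT : 0 < T) (hβ : 0 < β)
    (f : EuclideanSpace ℝ (Fin d) → ℝ)
    (hf : ContDiff ℝ 2 f)
    (hcoer : Tendsto f (cocompact (EuclideanSpace ℝ (Fin d))) atTop)
    (hint : ∀ c > 0,
      Integrable (fun y => Real.exp (-c * f y)) ∧
      Integrable (fun y => ‖gradient f y‖ * Real.exp (-c * f y)) ∧
      Integrable (fun y => ‖iteratedFDeriv ℝ 2 f y‖ * Real.exp (-c * f y)))
    (xstar : EuclideanSpace ℝ (Fin d))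
    (hmin : ∀ y, f xstar ≤ f y)
    (huniq : ∀ y, f y = f xstar → y = xstar) :
    ∀ K : Set (ℝ × EuclideanSpace ℝ (Fin d)), IsCompact K →
      K ⊆ Set.Ico 0 T ×ˢ Set.univ →
      ∀ φ : EuclideanSpace ℝ (Fin d) → ℝ, Continuous φ → (∃ Cb, ∀ y, |φ y| ≤ Cb) →
        TendstoUniformlyOn
          (fun lam (p : ℝ × EuclideanSpace ℝ (Fin d)) =>
            ∫ y, φ y * etaHC T β lam f p.1 p.2 y)
          (fun _ => φ xstar) (𝓝[>] 0) K := by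
  intro K hK hKT φ hφ ⟨Cb, hCb⟩
  obtain ⟨δ, hδ, hKδ⟩ := hK.exists_forall_le' (continuous_const.sub continuous_fst).continuousOn
    fun p hp => sub_pos.2 (hKT hp).1.2
  obtain ⟨R, hR⟩ := hK.exists_bound_of_continuousOn continuous_snd.continuousOn
  have hKt : ∀ p ∈ K, δ ≤ T - p.1 ∧ T - p.1 ≤ T := fun p hp =>
    ⟨hKδ p hp, by linarith [(hKT hp).1.1]⟩
  have hnear : ∀ p ∈ K, ∀ y ∈ Metric.ball xstar 1, ‖p.2 - y‖ ≤ R + (‖xstar‖ + 1) :=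
    fun p hp y hy => (norm_sub_le _ _).trans
      (add_le_add (hR p hp) (norm_le_of_mem_closedBall (Metric.ball_subset_closedBall hy)))
  have hlim := tendstoUniformlyOn_weightedGibbsMean_atTop (μ := volume) (φ := φ)
    (g := fun p y => heatK β (T - p.1) (p.2 - y)) (s := K)
    hf.continuous hcoer (fun y hy => (hmin y).lt_of_ne fun h => hy (huniq y h.symm))
    (by simpa using (hint 1 one_pos).1) hφ hCb
    (fun p _ =>
      ((continuous_heatK β _).comp (continuous_const.sub continuous_id)).aestronglyMeasurable)
    (fun p hp y => (heatK_pos hβ (hδ.trans_le (hKt p hp).1) _).le)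
    (fun p hp y => heatK_le hβ hδ (hKt p hp).1 _) (Metric.ball_mem_nhds xstar one_pos)
    (by positivity) (fun p hp y hy => le_heatK hβ hδ (hKt p hp).1 (hKt p hp).2 (hnear p hp y hy))
  refine (hlim.comp_tendsto (tendsto_div_two_mul_mul_nhdsGT_zero_atTop hT hβ)).congr ?_
  filter_upwards [self_mem_nhdsWithin] with lam hlam p _
  have hαpos : 0 < T / (2 * lam * β) := div_pos hT (mul_pos (mul_pos two_pos hlam) hβ)
  exact (integral_mul_etaHC (integral_exp_pos (hint _ hαpos).1).ne' φ p.1 p.2).symm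

theorem conditional_low_temp (d : ℕ) (hd : 1 ≤ d) (T β : ℝ)
    (hT : 0 < T) (hβ : 0 < β)
    (f : EuclideanSpace ℝ (Fin d) → ℝ)
    (hf : ContDiff ℝ 2 f)
    (hbdd : BddBelow (Set.range f))
    (hcoer : Tendsto f (cocompact (EuclideanSpace ℝ (Fin d))) atTop)
    (hint : ∀ c > 0,
      Integrable (fun y => Real.exp (-c * f y)) ∧
      Integrable (fun y => ‖gradient f y‖ * Real.exp (-c * f y)) ∧
      Integrable (fun y => ‖iteratedFDeriv ℝ 2 f y‖ * Real.exp (-c * f y)))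
    (xstar : EuclideanSpace ℝ (Fin d))
    (hmin : ∀ y, f xstar ≤ f y)
    (huniq : ∀ y, f y = f xstar → y = xstar) :
    ∀ K : Set (ℝ × EuclideanSpace ℝ (Fin d)), IsCompact K →
      K ⊆ Set.Ico 0 T ×ˢ Set.univ →
      ∀ φ : EuclideanSpace ℝ (Fin d) → ℝ, Continuous φ → (∃ Cb, ∀ y, |φ y| ≤ Cb) →
        TendstoUniformlyOn
          (fun lam (p : ℝ × EuclideanSpace ℝ (Fin d)) =>
            ∫ y, φ y * etaHC T β lam f p.1 p.2 y)
          (fun _ => φ xstar) (𝓝[>] 0) K :=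
  conditional_low_temp_general d T β hT hβ f hf hcoer hint xstar hmin huniq
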